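/- arXiv:2604.03743 — 2 statements merged into one kernel-verified Lean document; each statement's English description precedes it below -/
import Mathlib

section
/- Let n ≥ 1, let Γ be a subgroup of GL_n(ℤ) acting orientation-preservingly on Sym_n(ℝ), let h be a perfect form with σ = D(h), and let γ ∈ Γ with γ · σ ≠ σ such that τ = σ ∩ (γ · σ) is a facet of both σ and γ · σ. Then the following are equivalent: (a) there exists g ∈ Γ_σ with g · (γ⁻¹ · τ) = τ; (b) there exists g ∈ Γ_τ whose restriction to the hyperplane span_ℝ(τ) has negative determinant; (c) Γ_σ ∩ Γ_{γ·σ} has index 2 in Γ_τ (equivalently, the set Γ_{(σ, γσ)} = { s ∈ Γ : s · σ = γ · σ and s · (γ · σ) = σ } is nonempty). -/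
open Matrix

noncomputable section

/-- The real vector space of `n × n` real symmetric matrices, as a submodule of matrices. -/
def SymMat (n : ℕ) : Submodule ℝ (Matrix (Fin n) (Fin n) ℝ) where
  carrier := { A | Aᵀ = A }
  add_mem' := by
    intro a b ha hb
    simp only [Set.mem_setOf_eq] at *
    rw [Matrix.transpose_add, ha, hb]
  zero_mem' := by simp
  smul_mem' := by
    intro c a ha
    simp only [Set.mem_setOf_eq] at *
    rw [Matrix.transpose_smul, ha]

/-- The ℝ-linear endomorphism `X ↦ gᵀ X g` of the space of symmetric matrices. -/
def congrSym (n : ℕ) (g : Matrix (Fin n) (Fin n) ℝ) : SymMat n →ₗ[ℝ] SymMat n where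
  toFun X := ⟨gᵀ * X.1 * g, by
    have hX : (X.1)ᵀ = X.1 := X.2
    show (gᵀ * X.1 * g)ᵀ = gᵀ * X.1 * g
    rw [Matrix.transpose_mul, Matrix.transpose_mul, Matrix.transpose_transpose, hX,
      Matrix.mul_assoc]⟩
  map_add' X Y := by
    ext1
    show gᵀ * (X.1 + Y.1) * g = gᵀ * X.1 * g + gᵀ * Y.1 * g
    rw [Matrix.mul_add, Matrix.add_mul]
  map_smul' c X := by
    ext1
    show gᵀ * (c • X.1) * g = c • (gᵀ * X.1 * g)
    rw [Matrix.mul_smul, Matrix.smul_mul]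

/-- The real matrix obtained from an integer matrix. -/
def realMat {n : ℕ} (g : Matrix (Fin n) (Fin n) ℤ) : Matrix (Fin n) (Fin n) ℝ :=
  g.map (Int.cast : ℤ → ℝ)

/-- The action of `GL n ℤ` on symmetric matrices: `γ · X = (γ⁻¹)ᵀ X γ⁻¹`. -/
def intAct (n : ℕ) (γ : GL (Fin n) ℤ) : SymMat n →ₗ[ℝ] SymMat n :=
  congrSym n (realMat ((γ⁻¹ : GL (Fin n) ℤ) : Matrix (Fin n) (Fin n) ℤ))

lemma realMat_mul {n : ℕ} (A B : Matrix (Fin n) (Fin n) ℤ) :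
    realMat (A * B) = realMat A * realMat B := by
  simpa [realMat] using Matrix.map_mul (L := A) (M := B) (f := Int.castRingHom ℝ)

lemma realMat_one {n : ℕ} : realMat (1 : Matrix (Fin n) (Fin n) ℤ) = 1 := by
  simpa [realMat] using Matrix.map_one (Int.cast : ℤ → ℝ) Int.cast_zero Int.cast_one

lemma intAct_one (n : ℕ) : intAct n 1 = LinearMap.id := by
  unfold intAct congrSym
  ext X
  simp [realMat_one]

lemma intAct_mul (n : ℕ) (g h : GL (Fin n) ℤ) :
    intAct n (g * h) = (intAct n g).comp (intAct n h) := by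
  unfold intAct congrSym
  ext X
  simp [_root_.mul_inv_rev, realMat_mul, Matrix.transpose_mul, Matrix.mul_assoc]

/-- The action of `GL n ℤ` on subsets of symmetric matrices. -/
def actSet (n : ℕ) (γ : GL (Fin n) ℤ) (S : Set (SymMat n)) : Set (SymMat n) :=
  (intAct n γ) '' S

lemma actSet_one (n : ℕ) (S : Set (SymMat n)) : actSet n 1 S = S := by
  simp [actSet, intAct_one]

lemma actSet_mul (n : ℕ) (g h : GL (Fin n) ℤ) (S : Set (SymMat n)) :
    actSet n (g * h) S = actSet n g (actSet n h S) := by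
  rw [actSet, actSet, actSet, intAct_mul, ← Set.image_comp]; rfl

/-- The setwise stabilizer of `S` in the subgroup `Γ ≤ GL n ℤ`. -/
def stab (n : ℕ) (Γ : Subgroup (GL (Fin n) ℤ)) (S : Set (SymMat n)) : Subgroup (GL (Fin n) ℤ) where
  carrier := { g | g ∈ Γ ∧ actSet n g S = S }
  one_mem' := ⟨Γ.one_mem, actSet_one n S⟩
  mul_mem' := by
    rintro a b ⟨haΓ, ha⟩ ⟨hbΓ, hb⟩
    exact ⟨Γ.mul_mem haΓ hbΓ, by rw [actSet_mul, hb, ha]⟩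
  inv_mem' := by
    rintro a ⟨haΓ, ha⟩
    refine ⟨Γ.inv_mem haΓ, ?_⟩
    conv_lhs => rw [← ha]
    rw [← actSet_mul, inv_mul_cancel, actSet_one]
/-- The value `xᵀ h x` of a real quadratic form at an integer vector. -/
def intQuad (n : ℕ) (h : Matrix (Fin n) (Fin n) ℝ) (x : Fin n → ℤ) : ℝ :=
  (fun i => (x i : ℝ)) ⬝ᵥ h.mulVec (fun i => (x i : ℝ))

/-- The set of minimal vectors of `h`: the nonzero integer vectors achieving the minimum
of `h` over nonzero integer vectors. -/
def minVecs (n : ℕ) (h : Matrix (Fin n) (Fin n) ℝ) : Set (Fin n → ℤ) :=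
  { x | x ≠ 0 ∧ ∀ y : Fin n → ℤ, y ≠ 0 → intQuad n h x ≤ intQuad n h y }

/-- The symmetric rank-one matrix `x xᵀ` associated with an integer vector `x`. -/
def rankOneSym (n : ℕ) (x : Fin n → ℤ) : SymMat n :=
  ⟨Matrix.vecMulVec (fun i => (x i : ℝ)) (fun i => (x i : ℝ)), by
    show (Matrix.vecMulVec _ _)ᵀ = _
    ext i j
    simp [Matrix.vecMulVec, mul_comm]⟩

/-- A positive definite form `h` is perfect if the rank-one matrices `x xᵀ`, for `x` a
minimal vector of `h`, span the space of symmetric matrices. -/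
def IsPerfect (n : ℕ) (h : Matrix (Fin n) (Fin n) ℝ) : Prop :=
  h.PosDef ∧ Submodule.span ℝ (rankOneSym n '' minVecs n h) = ⊤

/-- The Voronoi domain of `h`: all nonnegative real linear combinations of the matrices
`x xᵀ` for `x` a minimal vector of `h`. -/
def VorDom (n : ℕ) (h : Matrix (Fin n) (Fin n) ℝ) : Set (SymMat n) :=
  { M | ∃ (s : Finset (Fin n → ℤ)) (c : (Fin n → ℤ) → ℝ),
      (∀ x ∈ s, x ∈ minVecs n h) ∧ (∀ x ∈ s, 0 ≤ c x) ∧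
      M = ∑ x ∈ s, c x • rankOneSym n x }

/-- `τ` is a facet of the convex cone `C`: an extreme subset whose ℝ-linear span is a
hyperplane (codimension-one subspace). -/
def IsFacetOf (n : ℕ) (C τ : Set (SymMat n)) : Prop :=
  IsExtreme ℝ C τ ∧
    Module.finrank ℝ (Submodule.span ℝ τ) + 1 = Module.finrank ℝ (SymMat n)

/-- Two perfect forms are neighbours if their (distinct) Voronoi domains intersect in a
common facet. -/
def Neighbours (n : ℕ) (h h' : Matrix (Fin n) (Fin n) ℝ) : Prop :=
  IsPerfect n h ∧ IsPerfect n h' ∧ VorDom n h ≠ VorDom n h' ∧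
    IsFacetOf n (VorDom n h) (VorDom n h ∩ VorDom n h') ∧
    IsFacetOf n (VorDom n h') (VorDom n h ∩ VorDom n h')

/-- Standing assumption (a theorem of Voronoi reduction theory): every facet of the
Voronoi domain of a perfect form is contained in exactly two Voronoi domains of perfect
forms, and is their intersection. -/
def StandingAssumption (n : ℕ) : Prop :=
  ∀ h : Matrix (Fin n) (Fin n) ℝ, IsPerfect n h →
    ∀ τ : Set (SymMat n), IsFacetOf n (VorDom n h) τ →
      ∃ h' : Matrix (Fin n) (Fin n) ℝ, IsPerfect n h' ∧ VorDom n h' ≠ VorDom n h ∧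
        τ = VorDom n h ∩ VorDom n h' ∧
        ∀ h'' : Matrix (Fin n) (Fin n) ℝ, IsPerfect n h'' → τ ⊆ VorDom n h'' →
          VorDom n h'' = VorDom n h ∨ VorDom n h'' = VorDom n h'

/-- The set of elements of `Γ` swapping the two sets `σ` and `σ'`. -/
def swapSet (n : ℕ) (Γ : Subgroup (GL (Fin n) ℤ)) (σ σ' : Set (SymMat n)) :
    Set (GL (Fin n) ℤ) :=
  { s | s ∈ Γ ∧ actSet n s σ = σ' ∧ actSet n s σ' = σ }

set_option synthInstance.maxHeartbeats 1000000 in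
/-- The determinant of the restriction of the action of `g` to the span of `τ`, given a
proof `hm` that the span is mapped into itself. -/
def restrictDet (n : ℕ) (g : GL (Fin n) ℤ) (τ : Set (SymMat n))
    (hm : ∀ x ∈ Submodule.span ℝ τ, intAct n g x ∈ Submodule.span ℝ τ) : ℝ :=
  LinearMap.det (M := Submodule.span ℝ τ) (A := ℝ)
    ((intAct n g).restrict (p := Submodule.span ℝ τ) (q := Submodule.span ℝ τ) hm)

/-!
Every `g ∈ Γ_τ` maps `σ` and `γσ` to Voronoi domains of perfect forms containing `τ`, so by the
standing assumption it either fixes both or swaps them. Hence (a) (take `s = g γ⁻¹`) and (c)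
(the swapping elements form the non-trivial coset of `Γ_σ ∩ Γ_{γσ}`) both amount to the
existence of a swapping element. For (b), the facet hyperplane `span τ = ker f` separates the two
domains, with `f ≥ 0` on `σ` and `f ≤ 0` on `γσ`. An element of `Γ_τ` acts on the line
`Sym_n(ℝ) ⧸ span τ` by a scalar `c`, with `c ≥ 0` if it fixes `σ` and `c ≤ 0` if it swaps the
domains, and its determinant is `c` times the determinant of its restriction to `span τ`; as the
total determinant is positive, the restricted determinant is negative exactly for the swapping
elements.
-/

open Module Submodule

theorem Submodule.exists_ker_eq_of_finrank_add_one {K V : Type*} [Field K] [AddCommGroup V]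
    [Module K V] [FiniteDimensional K V] (W : Submodule K V)
    (hW : finrank K W + 1 = finrank K V) : ∃ f : V →ₗ[K] K, LinearMap.ker f = W := by
  have hWtop : W ≠ ⊤ := fun h => by
    rw [h, finrank_top] at hW; omega
  obtain ⟨f, hf, hle⟩ := W.exists_le_ker_of_lt_top (lt_top_iff_ne_top.2 hWtop)
  refine ⟨f, (Submodule.eq_of_le_of_finrank_le hle ?_).symm⟩
  have := Submodule.finrank_lt (mt LinearMap.ker_eq_top.1 hf)
  omega

/-- `f (φ p) / f p` is the scalar by which `φ` acts on the line `V ⧸ ker f`. -/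
theorem LinearMap.det_eq_det_restrict_mul {K V : Type*} [Field K] [AddCommGroup V] [Module K V]
    [FiniteDimensional K V] (φ : V →ₗ[K] V) {f : V →ₗ[K] K} {W : Submodule K V}
    (hW : LinearMap.ker f = W) (hφ : ∀ x ∈ W, φ x ∈ W) {p : V} (hp : f p ≠ 0) :
    φ.det = (φ.restrict hφ).det * (f (φ p) / f p) := by
  subst hW
  have hquot : finrank K (V ⧸ LinearMap.ker f) = 1 := by
    have hsurj : Function.Surjective f := fun c =>
      ⟨(c / f p) • p, by rw [map_smul, smul_eq_mul, div_mul_cancel₀ c hp]⟩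
    rw [(f.quotKerEquivOfSurjective hsurj).finrank_eq, finrank_self]
  have hscalar :
      (LinearMap.ker f).mapQ (LinearMap.ker f) φ hφ = (f (φ p) / f p) • LinearMap.id := by
    ext x
    simp only [LinearMap.coe_comp, Function.comp_apply, Submodule.mkQ_apply,
      Submodule.mapQ_apply, LinearMap.smul_apply, LinearMap.id_apply,
      ← Submodule.Quotient.mk_smul, Submodule.Quotient.eq, LinearMap.mem_ker, map_sub,
      map_smul, smul_eq_mul]
    have hx := hφ (x - (f x / f p) • p) (by simp [hp])
    simp only [LinearMap.mem_ker, map_sub, map_smul, smul_eq_mul] at hx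
    linear_combination hx
  rw [LinearMap.det_eq_det_mul_det _ φ hφ, hscalar, LinearMap.det_smul, LinearMap.det_id,
    hquot, pow_one, mul_one]

namespace PointedCone

variable {𝕜 V : Type*} [Field 𝕜] [LinearOrder 𝕜] [IsStrictOrderedRing 𝕜]
  [AddCommGroup V] [Module 𝕜 V]

theorem isFaceOf_of_isExtreme {F C : PointedCone 𝕜 V} (h : IsExtreme 𝕜 (C : Set V) F) :
    F.IsFaceOf C where
  le := h.1
  mem_of_smul_add_mem {x y a} hx hy ha hxy := by
    have hseg : a • x + y ∈ openSegment 𝕜 ((2 * a) • x) ((2 : 𝕜) • y) :=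
      ⟨1 / 2, 1 / 2, by norm_num, by norm_num, by norm_num, by module⟩
    have h2x : (2 * a) • x ∈ F :=
      h.left_mem_of_mem_openSegment (C.smul_mem (by positivity) hx)
        (C.smul_mem (by norm_num) hy) hxy hseg
    have h2a : (2 * a)⁻¹ * (2 * a) = 1 := inv_mul_cancel₀ (by positivity)
    have := F.smul_mem (inv_nonneg.2 (by positivity : (0 : 𝕜) ≤ 2 * a)) h2x
    rwa [smul_smul, h2a, one_smul] at this

theorem mem_span_iff_exists_sub (C : PointedCone 𝕜 V) {z : V} :
    z ∈ span 𝕜 (C : Set V) ↔ ∃ x ∈ C, ∃ y ∈ C, x - y = z := by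
  refine ⟨fun hz => ?_, fun ⟨x, hx, y, hy, hxy⟩ =>
    hxy ▸ sub_mem (Submodule.subset_span hx) (Submodule.subset_span hy)⟩
  induction hz using Submodule.span_induction with
  | mem x hx => exact ⟨x, hx, 0, C.zero_mem, sub_zero x⟩
  | zero => exact ⟨0, C.zero_mem, 0, C.zero_mem, sub_zero 0⟩
  | add _ _ _ _ h₁ h₂ =>
    obtain ⟨x, hx, y, hy, rfl⟩ := h₁
    obtain ⟨x', hx', y', hy', rfl⟩ := h₂
    exact ⟨x + x', C.add_mem hx hx', y + y', C.add_mem hy hy', by abel⟩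
  | smul c _ _ h =>
    obtain ⟨x, hx, y, hy, rfl⟩ := h
    rcases le_or_gt 0 c with hc | hc
    · exact ⟨c • x, C.smul_mem hc hx, c • y, C.smul_mem hc hy, (smul_sub c x y).symm⟩
    · exact ⟨(-c) • y, C.smul_mem (by linarith) hy, (-c) • x, C.smul_mem (by linarith) hx,
        by module⟩

theorem IsFaceOf.mem_of_mem_span {F C : PointedCone 𝕜 V} (hF : F.IsFaceOf C) {z : V}
    (hz : z ∈ C) (hzF : z ∈ span 𝕜 (F : Set V)) : z ∈ F := by
  obtain ⟨x, hx, y, hy, rfl⟩ := F.mem_span_iff_exists_sub.1 hzF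
  exact hF.mem_of_add_mem_left hz (hF.le hy) (by simpa using hx)

theorem IsFaceOf.nonneg_or_nonpos {F C : PointedCone 𝕜 V} (hF : F.IsFaceOf C)
    {f : V →ₗ[𝕜] 𝕜} (hker : LinearMap.ker f = span 𝕜 (F : Set V)) :
    (∀ x ∈ C, 0 ≤ f x) ∨ ∀ x ∈ C, f x ≤ 0 := by
  by_contra! ⟨⟨a, ha, hfa⟩, b, hb, hfb⟩
  have hz : f b • a + (-f a) • b ∈ F := by
    refine hF.mem_of_mem_span
      (C.add_mem (C.smul_mem hfb.le ha) (C.smul_mem (by linarith) hb)) ?_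
    rw [← hker, LinearMap.mem_ker]
    simp only [map_add, map_smul, smul_eq_mul]
    ring
  have haF : a ∈ F := hF.mem_of_smul_add_smul_mem_left ha hb hfb (by linarith) hz
  have : f a = 0 := by rw [← LinearMap.mem_ker, hker]; exact Submodule.subset_span haF
  linarith

theorem exists_pos_of_span_eq_top {C : PointedCone 𝕜 V} (hC : span 𝕜 (C : Set V) = ⊤)
    {f : V →ₗ[𝕜] 𝕜} (hf : f ≠ 0) (hnonneg : ∀ x ∈ C, 0 ≤ f x) : ∃ p ∈ C, 0 < f p := by
  by_contra! hle
  refine hf (LinearMap.ker_eq_top.1 (top_le_iff.1 (hC ▸ span_le.2 fun x hx => ?_)))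
  exact le_antisymm (hle x hx) (hnonneg x hx)

theorem apply_nonpos_of_ker_eq_span_inf {C C' : PointedCone 𝕜 V} {f : V →ₗ[𝕜] 𝕜}
    (hker : LinearMap.ker f = span 𝕜 ((C ⊓ C' : PointedCone 𝕜 V) : Set V))
    {p : V} (hp : p ∈ C) (hfp : 0 < f p) {q : V} (hq : q ∈ C') : f q ≤ 0 := by
  by_contra! hfq
  have hz : f p • q - f q • p ∈ span 𝕜 ((C ⊓ C' : PointedCone 𝕜 V) : Set V) := by
    rw [← hker, LinearMap.mem_ker]
    simp only [map_sub, map_smul, smul_eq_mul]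
    ring
  obtain ⟨t, ht, t', ht', htt'⟩ := (C ⊓ C').mem_span_iff_exists_sub.1 hz
  -- `t + f q • p = t' + f p • q` lies in both cones, yet `f` is positive on it
  have hw : t + f q • p ∈ C ⊓ C' := by
    refine ⟨C.add_mem ht.1 (C.smul_mem hfq.le hp), ?_⟩
    rw [show t + f q • p = t' + f p • q by linear_combination (norm := module) htt']
    exact C'.add_mem ht'.2 (C'.smul_mem hfp.le hq)
  have hfw : f (t + f q • p) = 0 := by
    rw [← LinearMap.mem_ker, hker]; exact Submodule.subset_span hw
  have hft : f t = 0 := by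
    rw [← LinearMap.mem_ker, hker]; exact Submodule.subset_span ht
  rw [map_add, map_smul, smul_eq_mul, hft] at hfw
  nlinarith

theorem exists_separating_of_isFaceOf_inf [FiniteDimensional 𝕜 V] {C C' : PointedCone 𝕜 V}
    (hF : (C ⊓ C').IsFaceOf C)
    (hrank : finrank 𝕜 (span 𝕜 ((C ⊓ C' : PointedCone 𝕜 V) : Set V)) + 1 = finrank 𝕜 V)
    (hC : span 𝕜 (C : Set V) = ⊤) :
    ∃ f : V →ₗ[𝕜] 𝕜, LinearMap.ker f = span 𝕜 ((C ⊓ C' : PointedCone 𝕜 V) : Set V) ∧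
      (∃ p ∈ C, 0 < f p) ∧ (∀ x ∈ C, 0 ≤ f x) ∧ ∀ x ∈ C', f x ≤ 0 := by
  obtain ⟨f₀, hker₀⟩ := Submodule.exists_ker_eq_of_finrank_add_one _ hrank
  obtain ⟨f, hker, hnonneg⟩ : ∃ f : V →ₗ[𝕜] 𝕜,
      LinearMap.ker f = span 𝕜 ((C ⊓ C' : PointedCone 𝕜 V) : Set V) ∧ ∀ x ∈ C, 0 ≤ f x := by
    rcases hF.nonneg_or_nonpos hker₀ with hC₀ | hC₀
    · exact ⟨f₀, hker₀, hC₀⟩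
    · exact ⟨-f₀, by rw [LinearMap.ker_neg, hker₀], fun x hx => by simpa using hC₀ x hx⟩
  have hf : f ≠ 0 := by
    rintro rfl
    rw [LinearMap.ker_zero] at hker
    rw [← hker, finrank_top] at hrank
    omega
  obtain ⟨p, hp, hfp⟩ := exists_pos_of_span_eq_top hC hf hnonneg
  exact ⟨f, hker, ⟨p, hp, hfp⟩, hnonneg, fun q hq =>
    apply_nonpos_of_ker_eq_span_inf hker hp hfp hq⟩

end PointedCone

section VoronoiDomains

variable {n : ℕ}

lemma intAct_inv_apply (g : GL (Fin n) ℤ) (X : SymMat n) :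
    intAct n g⁻¹ (intAct n g X) = X := by
  rw [← LinearMap.comp_apply, ← intAct_mul, inv_mul_cancel, intAct_one, LinearMap.id_apply]

lemma intAct_apply_inv (g : GL (Fin n) ℤ) (X : SymMat n) :
    intAct n g (intAct n g⁻¹ X) = X := by
  simpa using intAct_inv_apply g⁻¹ X

lemma intAct_injective (g : GL (Fin n) ℤ) : Function.Injective (intAct n g) :=
  Function.LeftInverse.injective (g := intAct n g⁻¹) (intAct_inv_apply g)

lemma intAct_surjective (g : GL (Fin n) ℤ) : Function.Surjective (intAct n g) :=
  Function.RightInverse.surjective (g := intAct n g⁻¹) (intAct_apply_inv g)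

lemma realMat_mulVec (A : Matrix (Fin n) (Fin n) ℤ) (x : Fin n → ℤ) :
    realMat A *ᵥ (fun i => (x i : ℝ)) = fun i => ((A *ᵥ x) i : ℝ) := by
  funext i
  simp [realMat, Matrix.mulVec, dotProduct]

def invTransposeEquiv (g : GL (Fin n) ℤ) : (Fin n → ℤ) ≃ (Fin n → ℤ) where
  toFun x := ((g⁻¹ : GL (Fin n) ℤ) : Matrix (Fin n) (Fin n) ℤ)ᵀ *ᵥ x
  invFun x := (g : Matrix (Fin n) (Fin n) ℤ)ᵀ *ᵥ x
  left_inv x := by simp [Matrix.mulVec_mulVec, ← Matrix.transpose_mul]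
  right_inv x := by simp [Matrix.mulVec_mulVec, ← Matrix.transpose_mul]

lemma invTransposeEquiv_zero (g : GL (Fin n) ℤ) : invTransposeEquiv g 0 = 0 :=
  Matrix.mulVec_zero (α := ℤ) (((g⁻¹ : GL (Fin n) ℤ) : Matrix (Fin n) (Fin n) ℤ)ᵀ)

lemma intAct_rankOneSym (g : GL (Fin n) ℤ) (x : Fin n → ℤ) :
    intAct n g (rankOneSym n x) = rankOneSym n (invTransposeEquiv g x) := by
  apply Subtype.ext
  change (realMat _)ᵀ * Matrix.vecMulVec _ _ * realMat _ = Matrix.vecMulVec _ _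
  rw [Matrix.mul_vecMulVec, Matrix.vecMulVec_mul, ← Matrix.mulVec_transpose, realMat,
    ← Matrix.transpose_map, ← realMat, realMat_mulVec]
  rfl

def conjForm (g : GL (Fin n) ℤ) (h : Matrix (Fin n) (Fin n) ℝ) : Matrix (Fin n) (Fin n) ℝ :=
  realMat (g : Matrix (Fin n) (Fin n) ℤ) * h * (realMat (g : Matrix (Fin n) (Fin n) ℤ))ᵀ

lemma realMat_inv_mul (g : GL (Fin n) ℤ) :
    realMat ((g⁻¹ : GL (Fin n) ℤ) : Matrix (Fin n) (Fin n) ℤ) *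
      realMat (g : Matrix (Fin n) (Fin n) ℤ) = 1 := by
  rw [← realMat_mul, Units.inv_mul, realMat_one]

lemma realMat_mul_inv (g : GL (Fin n) ℤ) :
    realMat (g : Matrix (Fin n) (Fin n) ℤ) *
      realMat ((g⁻¹ : GL (Fin n) ℤ) : Matrix (Fin n) (Fin n) ℤ) = 1 := by
  rw [← realMat_mul, Units.mul_inv, realMat_one]

lemma intQuad_conjForm (g : GL (Fin n) ℤ) (h : Matrix (Fin n) (Fin n) ℝ) (x : Fin n → ℤ) :
    intQuad n (conjForm g h) (invTransposeEquiv g x) = intQuad n h x := by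
  have hcast : (fun i => (invTransposeEquiv g x i : ℝ)) =
      (realMat ((g⁻¹ : GL (Fin n) ℤ) : Matrix (Fin n) (Fin n) ℤ))ᵀ *ᵥ
        fun i => (x i : ℝ) := by
    rw [realMat, ← Matrix.transpose_map, ← realMat, realMat_mulVec]
    rfl
  rw [intQuad, intQuad, hcast, conjForm, Matrix.mulVec_mulVec, Matrix.mul_assoc _ _ᵀ,
    ← Matrix.transpose_mul, realMat_inv_mul, Matrix.transpose_one, Matrix.mul_one,
    Matrix.mulVec_transpose, ← Matrix.dotProduct_mulVec, Matrix.mulVec_mulVec,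
    ← Matrix.mul_assoc, realMat_inv_mul, Matrix.one_mul]

lemma minVecs_eq_image {h h' : Matrix (Fin n) (Fin n) ℝ} (e : (Fin n → ℤ) ≃ (Fin n → ℤ))
    (he : e 0 = 0) (hQ : ∀ x, intQuad n h' (e x) = intQuad n h x) :
    minVecs n h' = e '' minVecs n h := by
  have he_iff : ∀ x, e x = 0 ↔ x = 0 := fun x =>
    ⟨fun hx => e.injective (hx.trans he.symm), fun hx => hx ▸ he⟩
  ext y
  obtain ⟨x, rfl⟩ := e.surjective y
  simp only [minVecs, e.image_eq_preimage_symm, Set.mem_preimage, Set.mem_ofPred_eq,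
    Equiv.symm_apply_apply, ne_eq, he_iff, hQ]
  exact and_congr_right fun _ => e.forall_congr_right.symm.trans (by simp only [he_iff, hQ])

lemma minVecs_conjForm (g : GL (Fin n) ℤ) (h : Matrix (Fin n) (Fin n) ℝ) :
    minVecs n (conjForm g h) = invTransposeEquiv g '' minVecs n h :=
  minVecs_eq_image _ (invTransposeEquiv_zero g) (intQuad_conjForm g h)

lemma rankOneSym_image_minVecs_conjForm (g : GL (Fin n) ℤ) (h : Matrix (Fin n) (Fin n) ℝ) :
    rankOneSym n '' minVecs n (conjForm g h) = intAct n g '' (rankOneSym n '' minVecs n h) := by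
  rw [minVecs_conjForm, Set.image_image, Set.image_image]
  simp only [intAct_rankOneSym]

lemma IsPerfect.conjForm {h : Matrix (Fin n) (Fin n) ℝ} (hperf : IsPerfect n h)
    (g : GL (Fin n) ℤ) : IsPerfect n (conjForm g h) := by
  refine ⟨?_, ?_⟩
  · have hinj : Function.Injective (realMat (g : Matrix (Fin n) (Fin n) ℤ)).vecMul :=
      Function.LeftInverse.injective
        (g := (· ᵥ* realMat ((g⁻¹ : GL (Fin n) ℤ) : Matrix (Fin n) (Fin n) ℤ)))
        fun v => by dsimp only; rw [Matrix.vecMul_vecMul, realMat_mul_inv, Matrix.vecMul_one]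
    have := hperf.1.mul_mul_conjTranspose_same hinj
    rwa [Matrix.conjTranspose_eq_transpose_of_trivial] at this
  · rw [rankOneSym_image_minVecs_conjForm, Submodule.span_image, hperf.2, Submodule.map_top,
      LinearMap.range_eq_top.2 (intAct_surjective g)]

lemma vorDom_eq_hull (h : Matrix (Fin n) (Fin n) ℝ) :
    VorDom n h = PointedCone.hull ℝ (rankOneSym n '' minVecs n h) := by
  ext M
  constructor
  · rintro ⟨s, c, hs, hc, rfl⟩
    exact Submodule.sum_mem _ fun x hx =>
      PointedCone.smul_mem _ (hc x hx) (PointedCone.subset_hull ⟨x, hs x hx, rfl⟩)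
  · intro hM
    obtain ⟨l, hl, rfl⟩ := (Finsupp.mem_span_image_iff_linearCombination _).1 hM
    exact ⟨l.support, fun x => l x, fun x hx => hl hx, fun x _ => (l x).2, rfl⟩

lemma actSet_vorDom (g : GL (Fin n) ℤ) (h : Matrix (Fin n) (Fin n) ℝ) :
    actSet n g (VorDom n h) = VorDom n (conjForm g h) := by
  rw [vorDom_eq_hull, vorDom_eq_hull, rankOneSym_image_minVecs_conjForm, actSet,
    ← PointedCone.coe_map, PointedCone.map, Submodule.map_span, LinearMap.coe_restrictScalars]

lemma IsPerfect.span_vorDom {h : Matrix (Fin n) (Fin n) ℝ} (hperf : IsPerfect n h) :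
    Submodule.span ℝ (VorDom n h) = ⊤ := by
  rw [vorDom_eq_hull, Submodule.span_span_of_tower, hperf.2]

end VoronoiDomains
section Neighbours

variable {n : ℕ}

lemma actSet_inter (g : GL (Fin n) ℤ) (S T : Set (SymMat n)) :
    actSet n g (S ∩ T) = actSet n g S ∩ actSet n g T :=
  Set.image_inter (intAct_injective g)

lemma mem_stab_inter_of_mem_swapSet {Γ : Subgroup (GL (Fin n) ℤ)} {S T : Set (SymMat n)}
    {s : GL (Fin n) ℤ} (hs : s ∈ swapSet n Γ S T) : s ∈ stab n Γ (S ∩ T) :=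
  ⟨hs.1, by rw [actSet_inter, hs.2.1, hs.2.2, Set.inter_comm]⟩

lemma intAct_mem_span_of_actSet_eq {g : GL (Fin n) ℤ} {S : Set (SymMat n)}
    (hg : actSet n g S = S) :
    ∀ x ∈ Submodule.span ℝ S, intAct n g x ∈ Submodule.span ℝ S := by
  intro x hx
  rw [← hg, actSet, Submodule.span_image]
  exact Submodule.mem_map_of_mem hx

lemma vorDom_eq_or_eq_of_inter_subset (standing : StandingAssumption n)
    {h h' h'' : Matrix (Fin n) (Fin n) ℝ} (hperf : IsPerfect n h) (hperf' : IsPerfect n h')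
    (hperf'' : IsPerfect n h'') (hne : VorDom n h' ≠ VorDom n h)
    (hfac : IsFacetOf n (VorDom n h) (VorDom n h ∩ VorDom n h'))
    (hsub : VorDom n h ∩ VorDom n h' ⊆ VorDom n h'') :
    VorDom n h'' = VorDom n h ∨ VorDom n h'' = VorDom n h' := by
  obtain ⟨h₂, -, -, -, huniq⟩ := standing h hperf _ hfac
  rw [(huniq h' hperf' Set.inter_subset_right).resolve_left hne]
  exact huniq h'' hperf'' hsub

lemma actSet_vorDom_eq_or_swap (standing : StandingAssumption n)
    {h h' : Matrix (Fin n) (Fin n) ℝ} (hperf : IsPerfect n h) (hperf' : IsPerfect n h')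
    (hne : VorDom n h' ≠ VorDom n h)
    (hfac : IsFacetOf n (VorDom n h) (VorDom n h ∩ VorDom n h')) {g : GL (Fin n) ℤ}
    (hg : actSet n g (VorDom n h ∩ VorDom n h') = VorDom n h ∩ VorDom n h') :
    (actSet n g (VorDom n h) = VorDom n h ∧ actSet n g (VorDom n h') = VorDom n h') ∨
      (actSet n g (VorDom n h) = VorDom n h' ∧ actSet n g (VorDom n h') = VorDom n h) := by
  have hcases : ∀ {k : Matrix (Fin n) (Fin n) ℝ}, IsPerfect n k →
      VorDom n h ∩ VorDom n h' ⊆ VorDom n k →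
        actSet n g (VorDom n k) = VorDom n h ∨ actSet n g (VorDom n k) = VorDom n h' := by
    intro k hk hsub
    rw [actSet_vorDom]
    refine vorDom_eq_or_eq_of_inter_subset standing hperf hperf' (hk.conjForm g) hne hfac ?_
    rw [← actSet_vorDom, ← hg]
    exact Set.image_mono hsub
  have hinj : actSet n g (VorDom n h) ≠ actSet n g (VorDom n h') := fun heq =>
    hne (Set.image_injective.2 (intAct_injective g) heq).symm
  rcases hcases hperf Set.inter_subset_left with h₁ | h₁ <;>
    rcases hcases hperf' Set.inter_subset_right with h₂ | h₂
  · exact absurd (h₁.trans h₂.symm) hinj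
  · exact Or.inl ⟨h₁, h₂⟩
  · exact Or.inr ⟨h₁, h₂⟩
  · exact absurd (h₁.trans h₂.symm) hinj

theorem exists_stab_actSet_inv_inter_iff (standing : StandingAssumption n)
    {Γ : Subgroup (GL (Fin n) ℤ)} {h h' : Matrix (Fin n) (Fin n) ℝ} (hperf : IsPerfect n h)
    (hperf' : IsPerfect n h') (hne : VorDom n h' ≠ VorDom n h)
    (hfac : IsFacetOf n (VorDom n h) (VorDom n h ∩ VorDom n h'))
    {γ : GL (Fin n) ℤ} (hγ : γ ∈ Γ) (hγh : actSet n γ (VorDom n h) = VorDom n h') :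
    (∃ g ∈ stab n Γ (VorDom n h),
        actSet n g (actSet n γ⁻¹ (VorDom n h ∩ VorDom n h')) = VorDom n h ∩ VorDom n h') ↔
      (swapSet n Γ (VorDom n h) (VorDom n h')).Nonempty := by
  constructor
  · rintro ⟨g, ⟨hgΓ, hgh⟩, hgτ⟩
    have hs' : actSet n (g * γ⁻¹) (VorDom n h') = VorDom n h := by
      rw [← hγh, ← actSet_mul, inv_mul_cancel_right, hgh]
    rcases actSet_vorDom_eq_or_swap standing hperf hperf' hne hfac (by rwa [actSet_mul])
      with ⟨-, hfix⟩ | hswap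
    · exact absurd (hfix.symm.trans hs') hne
    · exact ⟨g * γ⁻¹, Γ.mul_mem hgΓ (Γ.inv_mem hγ), hswap⟩
  · rintro ⟨s, hs⟩
    refine ⟨s * γ, ⟨Γ.mul_mem hs.1 hγ, by rw [actSet_mul, hγh, hs.2.2]⟩, ?_⟩
    rw [← actSet_mul, mul_inv_cancel_right]
    exact (mem_stab_inter_of_mem_swapSet hs).2

theorem relIndex_stab_inf_stab_eq_two (standing : StandingAssumption n)
    {Γ : Subgroup (GL (Fin n) ℤ)} {h h' : Matrix (Fin n) (Fin n) ℝ} (hperf : IsPerfect n h)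
    (hperf' : IsPerfect n h') (hne : VorDom n h' ≠ VorDom n h)
    (hfac : IsFacetOf n (VorDom n h) (VorDom n h ∩ VorDom n h'))
    {s : GL (Fin n) ℤ} (hs : s ∈ swapSet n Γ (VorDom n h) (VorDom n h')) :
    (stab n Γ (VorDom n h) ⊓ stab n Γ (VorDom n h')).relIndex
      (stab n Γ (VorDom n h ∩ VorDom n h')) = 2 := by
  refine Subgroup.relIndex_eq_two_iff_exists_notMem_and.2
    ⟨s, mem_stab_inter_of_mem_swapSet hs, fun hsK => hne (hs.2.1.symm.trans hsK.1.2),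
      fun b ⟨hbΓ, hbτ⟩ => ?_⟩
  have hbsΓ : b * s ∈ Γ := Γ.mul_mem hbΓ hs.1
  rcases actSet_vorDom_eq_or_swap standing hperf hperf' hne hfac hbτ with
    ⟨h₁, h₂⟩ | ⟨h₁, h₂⟩
  · exact Or.inr ⟨⟨hbΓ, h₁⟩, hbΓ, h₂⟩
  · exact Or.inl ⟨⟨hbsΓ, by rw [actSet_mul, hs.2.1, h₂]⟩, hbsΓ,
      by rw [actSet_mul, hs.2.2, h₁]⟩

theorem exists_restrictDet_neg_iff (standing : StandingAssumption n)
    {Γ : Subgroup (GL (Fin n) ℤ)} (hop : ∀ g ∈ Γ, 0 < LinearMap.det (intAct n g))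
    {h h' : Matrix (Fin n) (Fin n) ℝ} (hperf : IsPerfect n h) (hperf' : IsPerfect n h')
    (hne : VorDom n h' ≠ VorDom n h)
    (hfac : IsFacetOf n (VorDom n h) (VorDom n h ∩ VorDom n h')) :
    (∃ g ∈ stab n Γ (VorDom n h ∩ VorDom n h'),
        ∃ hm : (∀ x ∈ Submodule.span ℝ (VorDom n h ∩ VorDom n h'),
          intAct n g x ∈ Submodule.span ℝ (VorDom n h ∩ VorDom n h')),
          restrictDet n g (VorDom n h ∩ VorDom n h') hm < 0) ↔
      (swapSet n Γ (VorDom n h) (VorDom n h')).Nonempty := by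
  have hC := vorDom_eq_hull h
  have hC' := vorDom_eq_hull h'
  set C := PointedCone.hull ℝ (rankOneSym n '' minVecs n h)
  set C' := PointedCone.hull ℝ (rankOneSym n '' minVecs n h')
  have hτ : VorDom n h ∩ VorDom n h' = ((C ⊓ C' : PointedCone ℝ (SymMat n)) : Set _) := by
    rw [hC, hC']; rfl
  obtain ⟨f, hker, ⟨p, hpC, hfp⟩, hnonneg, hnonpos⟩ :=
    PointedCone.exists_separating_of_isFaceOf_inf
      (PointedCone.isFaceOf_of_isExtreme (hτ ▸ hC ▸ hfac.1)) (hτ ▸ hfac.2)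
      (hC ▸ hperf.span_vorDom)
  rw [← hτ] at hker
  have hdet : ∀ g hm, LinearMap.det (intAct n g) =
      restrictDet n g (VorDom n h ∩ VorDom n h') hm * (f (intAct n g p) / f p) :=
    fun g hm => LinearMap.det_eq_det_restrict_mul _ hker hm hfp.ne'
  have himage : ∀ {g : GL (Fin n) ℤ} {k : Matrix (Fin n) (Fin n) ℝ},
      actSet n g (VorDom n h) = VorDom n k → intAct n g p ∈ VorDom n k :=
    fun hgk => hgk ▸ ⟨p, hC ▸ hpC, rfl⟩
  constructor
  · rintro ⟨g, ⟨hgΓ, hgτ⟩, hm, hneg⟩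
    refine ⟨g, hgΓ, (actSet_vorDom_eq_or_swap standing hperf hperf' hne hfac hgτ).resolve_left
      fun ⟨hgh, _⟩ => ?_⟩
    have hfg : 0 ≤ f (intAct n g p) :=
      hnonneg _ (show _ ∈ (C : Set (SymMat n)) from hC ▸ himage hgh)
    have hpos := hop g hgΓ
    rw [hdet g hm] at hpos
    exact (mul_nonpos_of_nonpos_of_nonneg hneg.le (div_nonneg hfg hfp.le)).not_gt hpos
  · rintro ⟨s, hs⟩
    have hsτ := mem_stab_inter_of_mem_swapSet hs
    refine ⟨s, hsτ, intAct_mem_span_of_actSet_eq hsτ.2, ?_⟩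
    have hfs : f (intAct n s p) ≤ 0 :=
      hnonpos _ (show _ ∈ (C' : Set (SymMat n)) from hC' ▸ himage hs.2.1)
    have hpos := hop s hs.1
    rw [hdet s (intAct_mem_span_of_actSet_eq hsτ.2)] at hpos
    by_contra! hnn
    exact (mul_nonpos_of_nonneg_of_nonpos hnn
      (div_nonpos_of_nonpos_of_nonneg hfs hfp.le)).not_gt hpos

end Neighbours

theorem statement9_general (n : ℕ) (standing : StandingAssumption n)
    (Γ : Subgroup (GL (Fin n) ℤ))
    (hop : ∀ g ∈ Γ, 0 < LinearMap.det (intAct n g))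
    (h : Matrix (Fin n) (Fin n) ℝ) (hperf : IsPerfect n h)
    (σ : Set (SymMat n)) (hσ : σ = VorDom n h)
    (γ : GL (Fin n) ℤ) (hγ : γ ∈ Γ) (hne : actSet n γ σ ≠ σ)
    (τ : Set (SymMat n)) (hτ : τ = σ ∩ actSet n γ σ)
    (hfac : IsFacetOf n σ τ) :
    ((∃ g ∈ stab n Γ σ, actSet n g (actSet n γ⁻¹ τ) = τ) ↔
      (∃ g ∈ stab n Γ τ,
        ∃ hm : (∀ x ∈ Submodule.span ℝ τ, intAct n g x ∈ Submodule.span ℝ τ),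
          restrictDet n g τ hm < 0)) ∧
    ((∃ g ∈ stab n Γ σ, actSet n g (actSet n γ⁻¹ τ) = τ) ↔
      (Subgroup.relIndex (stab n Γ σ ⊓ stab n Γ (actSet n γ σ)) (stab n Γ τ) = 2 ∧
        (swapSet n Γ σ (actSet n γ σ)).Nonempty)) := by
  subst hσ hτ
  have hγh := actSet_vorDom γ h
  have hperf' := hperf.conjForm γ
  rw [hγh] at hne hfac ⊢
  have ha := exists_stab_actSet_inv_inter_iff standing hperf hperf' hne hfac hγ hγh
  have hb := exists_restrictDet_neg_iff standing hop hperf hperf' hne hfac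
  refine ⟨ha.trans hb.symm, ha.trans ⟨fun hs => ⟨?_, hs⟩, And.right⟩⟩
  obtain ⟨s, hs⟩ := hs
  exact relIndex_stab_inf_stab_eq_two standing hperf hperf' hne hfac hs

/-- Let `Γ ≤ GL_n(ℤ)` act orientation-preservingly, `h` a perfect form with
`σ = D(h)`, and `γ ∈ Γ` with `γ·σ ≠ σ` such that `τ = σ ∩ γ·σ` is a facet of both. TFAE:
(a) some `g ∈ Γ_σ` maps `γ⁻¹·τ` to `τ`; (b) some `g ∈ Γ_τ` restricts to `span ℝ τ` with
negative determinant; (c) `Γ_σ ∩ Γ_{γσ}` has index 2 in `Γ_τ` (equivalently,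
`Γ_{(σ,γσ)}` is nonempty). -/
theorem statement9 (n : ℕ) (hn : 1 ≤ n) (standing : StandingAssumption n)
    (Γ : Subgroup (GL (Fin n) ℤ))
    (hop : ∀ g ∈ Γ, 0 < LinearMap.det (intAct n g))
    (h : Matrix (Fin n) (Fin n) ℝ) (hperf : IsPerfect n h)
    (σ : Set (SymMat n)) (hσ : σ = VorDom n h)
    (γ : GL (Fin n) ℤ) (hγ : γ ∈ Γ) (hne : actSet n γ σ ≠ σ)
    (τ : Set (SymMat n)) (hτ : τ = σ ∩ actSet n γ σ)
    (hfac : IsFacetOf n σ τ) (hfac' : IsFacetOf n (actSet n γ σ) τ) :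
    ((∃ g ∈ stab n Γ σ, actSet n g (actSet n γ⁻¹ τ) = τ) ↔
      (∃ g ∈ stab n Γ τ,
        ∃ hm : (∀ x ∈ Submodule.span ℝ τ, intAct n g x ∈ Submodule.span ℝ τ),
          restrictDet n g τ hm < 0)) ∧
    ((∃ g ∈ stab n Γ σ, actSet n g (actSet n γ⁻¹ τ) = τ) ↔
      (Subgroup.relIndex (stab n Γ σ ⊓ stab n Γ (actSet n γ σ)) (stab n Γ τ) = 2 ∧
        (swapSet n Γ σ (actSet n γ σ)).Nonempty)) :=
  statement9_general n standing Γ hop h hperf σ hσ γ hγ hne τ hτ hfac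
end
end

section
/- Let τ ⊆ Sym_2(ℝ) be the set of all nonnegative real linear combinations of the matrices [[1,0],[0,0]] and [[0,0],[0,1]] (a facet of the Voronoi domain of the perfect form A₂). Then the setwise stabilizer of τ in GL_2(ℤ) under the action γ · X = (γ⁻¹)ᵀ X γ⁻¹ equals the integer orthogonal group O_2(ℤ) = { γ ∈ GL_2(ℤ) : γᵀ γ = I }. -/
open Matrix

noncomputable section

/-! With `N = γ⁻¹`, `γ` maps `τ` into itself iff `Nᵀ diag(p, q) N` is diagonal for all
`p, q ≥ 0` (its diagonal entries `p N₀ⱼ² + q N₁ⱼ²` are nonnegative anyway), i.e. iff each row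
of `N` has a zero entry. For an integer matrix of determinant `±1` this is equivalent to
`NᵀN = 1`: rows with disjoint supports make `NᵀN` diagonal with nonnegative integer entries whose
product is `det N ^ 2 = 1`, and conversely an integer unit row vector has a zero entry.
Finally `γ` stabilizes `τ` iff both `γ` and `γ⁻¹` map `τ` into itself, and `O₂(ℤ)` is closed
under inversion. -/

lemma mem_stab {n : ℕ} {Γ : Subgroup (GL (Fin n) ℤ)} {S : Set (SymMat n)} {g : GL (Fin n) ℤ} :
    g ∈ stab n Γ S ↔ g ∈ Γ ∧ actSet n g S = S := Iff.rfl

lemma actSet_eq_iff {n : ℕ} (g : GL (Fin n) ℤ) (S : Set (SymMat n)) :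
    actSet n g S = S ↔ actSet n g S ⊆ S ∧ actSet n g⁻¹ S ⊆ S := by
  have hcancel : actSet n g (actSet n g⁻¹ S) = S := by
    rw [← actSet_mul, mul_inv_cancel, actSet_one]
  refine ⟨fun h => ⟨h.subset, ?_⟩, fun ⟨h, hinv⟩ => h.antisymm ?_⟩
  · conv_lhs => rw [← h]
    rw [← actSet_mul, inv_mul_cancel, actSet_one]
  · exact hcancel.symm.subset.trans (Set.image_mono hinv)

lemma mapsTo_congrSym_iff {n : ℕ} (g : Matrix (Fin n) (Fin n) ℝ)
    {C : Set (Matrix (Fin n) (Fin n) ℝ)} (hC : C ⊆ SymMat n) :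
    Set.MapsTo (congrSym n g) (Subtype.val ⁻¹' C) (Subtype.val ⁻¹' C) ↔
      Set.MapsTo (fun X => gᵀ * X * g) C C :=
  ⟨fun h X hX => h (x := ⟨X, hC hX⟩) hX, fun h _ hX => h hX⟩

lemma Matrix.GeneralLinearGroup.transpose_mul_self_inv_eq_one_iff {n R : Type*} [Fintype n]
    [DecidableEq n] [CommRing R] (u : GL n R) :
    ((u⁻¹ : GL n R) : Matrix n n R)ᵀ * (u⁻¹ : GL n R) = 1 ↔ (u : Matrix n n R)ᵀ * u = 1 := by
  suffices ∀ v : GL n R, (v : Matrix n n R)ᵀ * v = 1 →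
      ((v⁻¹ : GL n R) : Matrix n n R)ᵀ * (v⁻¹ : GL n R) = 1 from
    ⟨fun h => inv_inv u ▸ this u⁻¹ h, this u⟩
  intro v hv
  rw [coe_units_inv, inv_eq_left_inv hv, transpose_transpose, mul_eq_one_comm.mp hv]

lemma smul_add_smul_eq_diag (p q : ℝ) :
    p • !![(1 : ℝ), 0; 0, 0] + q • !![(0 : ℝ), 0; 0, 1] = !![p, 0; 0, q] := by
  ext i j
  fin_cases i <;> fin_cases j <;> simp

def diagCone : Set (Matrix (Fin 2) (Fin 2) ℝ) :=
  { M | ∃ p q : ℝ, 0 ≤ p ∧ 0 ≤ q ∧ M = !![p, 0; 0, q] }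

lemma diagCone_subset_symMat : diagCone ⊆ SymMat 2 := by
  rintro _ ⟨p, q, -, -, rfl⟩
  ext i j
  fin_cases i <;> fin_cases j <;> rfl

lemma transpose_mul_diag_mul (A : Matrix (Fin 2) (Fin 2) ℝ) (p q : ℝ) :
    Aᵀ * !![p, 0; 0, q] * A =
      !![p * A 0 0 ^ 2 + q * A 1 0 ^ 2, p * (A 0 0 * A 0 1) + q * (A 1 0 * A 1 1);
        p * (A 0 0 * A 0 1) + q * (A 1 0 * A 1 1), p * A 0 1 ^ 2 + q * A 1 1 ^ 2] := by
  ext i j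
  fin_cases i <;> fin_cases j <;> simp [mul_apply, Fin.sum_univ_two] <;> ring

lemma mapsTo_diagCone_iff (A : Matrix (Fin 2) (Fin 2) ℝ) :
    Set.MapsTo (fun X => Aᵀ * X * A) diagCone diagCone ↔
      A 0 0 * A 0 1 = 0 ∧ A 1 0 * A 1 1 = 0 := by
  constructor
  · intro h
    have offDiag (p q : ℝ) (hp : 0 ≤ p) (hq : 0 ≤ q) :
        p * (A 0 0 * A 0 1) + q * (A 1 0 * A 1 1) = 0 := by
      obtain ⟨p', q', -, -, hpq⟩ := h ⟨p, q, hp, hq, rfl⟩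
      simpa [transpose_mul_diag_mul] using congrFun (congrFun hpq 0) 1
    simpa using And.intro (offDiag 1 0 zero_le_one le_rfl) (offDiag 0 1 le_rfl zero_le_one)
  · rintro ⟨h0, h1⟩ _ ⟨p, q, hp, hq, rfl⟩
    refine ⟨p * A 0 0 ^ 2 + q * A 1 0 ^ 2, p * A 0 1 ^ 2 + q * A 1 1 ^ 2, by positivity,
      by positivity, ?_⟩
    simp [transpose_mul_diag_mul, h0, h1]

lemma Int.mul_eq_zero_of_sq_add_sq_eq_one {a b : ℤ} (h : a ^ 2 + b ^ 2 = 1) : a * b = 0 := by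
  have : 2 * (a * b) ≤ 1 := by nlinarith [sq_nonneg (a - b)]
  have : -1 ≤ 2 * (a * b) := by nlinarith [sq_nonneg (a + b)]
  omega

lemma Matrix.transpose_mul_self_eq_one_iff_fin_two {N : Matrix (Fin 2) (Fin 2) ℤ}
    (hN : IsUnit N.det) :
    Nᵀ * N = 1 ↔ N 0 0 * N 0 1 = 0 ∧ N 1 0 * N 1 1 = 0 := by
  constructor
  · intro h
    have hrows := mul_eq_one_comm.mp h
    have h0 := congrFun (congrFun hrows 0) 0
    have h1 := congrFun (congrFun hrows 1) 1
    simp only [mul_apply, Fin.sum_univ_two, transpose_apply, one_apply_eq, ← sq] at h0 h1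
    exact ⟨Int.mul_eq_zero_of_sq_add_sq_eq_one h0, Int.mul_eq_zero_of_sq_add_sq_eq_one h1⟩
  · rintro ⟨h0, h1⟩
    have hdiag : Nᵀ * N = !![N 0 0 ^ 2 + N 1 0 ^ 2, 0; 0, N 0 1 ^ 2 + N 1 1 ^ 2] := by
      ext i j
      fin_cases i <;> fin_cases j <;> simp [mul_apply, Fin.sum_univ_two, sq] <;> linarith
    have hdet : (Nᵀ * N).det = 1 := by rw [det_mul, det_transpose, Int.isUnit_mul_self hN]
    rw [hdiag, det_fin_two_of, mul_zero, sub_zero] at hdet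
    rw [hdiag, Int.eq_one_of_mul_eq_one_right (by positivity) hdet,
      Int.eq_one_of_mul_eq_one_left (by positivity) hdet, one_fin_two]

lemma actSet_diagCone_subset_iff (γ : GL (Fin 2) ℤ) :
    actSet 2 γ (Subtype.val ⁻¹' diagCone) ⊆ Subtype.val ⁻¹' diagCone ↔
      ((γ⁻¹ : GL (Fin 2) ℤ) : Matrix (Fin 2) (Fin 2) ℤ)ᵀ * (γ⁻¹ : GL (Fin 2) ℤ) = 1 := by
  rw [actSet, ← Set.mapsTo_iff_image_subset, intAct,
    mapsTo_congrSym_iff _ diagCone_subset_symMat, mapsTo_diagCone_iff,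
    Matrix.transpose_mul_self_eq_one_iff_fin_two (isUnits_det_units _)]
  simp only [realMat, map_apply]
  norm_cast

/-- Let `τ ⊆ Sym_2(ℝ)` be the cone of nonnegative combinations of
`[[1,0],[0,0]]` and `[[0,0],[0,1]]`. Its setwise stabilizer in `GL_2(ℤ)` (acting by
`γ · X = (γ⁻¹)ᵀ X γ⁻¹`) is the integer orthogonal group `O_2(ℤ) = {γ : γᵀγ = 1}`. -/
theorem statement15 (τ : Set (SymMat 2))
    (hτ : τ = { M : SymMat 2 | ∃ a b : ℝ, 0 ≤ a ∧ 0 ≤ b ∧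
      (M : Matrix (Fin 2) (Fin 2) ℝ) = a • !![(1 : ℝ), 0; 0, 0] + b • !![(0 : ℝ), 0; 0, 1] }) :
    (stab 2 ⊤ τ : Set (GL (Fin 2) ℤ)) =
      { γ : GL (Fin 2) ℤ | (γ : Matrix (Fin 2) (Fin 2) ℤ)ᵀ * (γ : Matrix (Fin 2) (Fin 2) ℤ) = 1 } := by
  have hτ_cone : τ = Subtype.val ⁻¹' diagCone := by
    subst hτ
    ext M
    simp only [Set.mem_ofPred_eq, Set.mem_preimage, diagCone, smul_add_smul_eq_diag]
  ext γ
  rw [SetLike.mem_coe, mem_stab, hτ_cone, actSet_eq_iff, actSet_diagCone_subset_iff,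
    actSet_diagCone_subset_iff, inv_inv,
    Matrix.GeneralLinearGroup.transpose_mul_self_inv_eq_one_iff]
  simp only [Subgroup.mem_top, true_and, and_self, Set.mem_ofPred_eq]
end
end
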